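/- arXiv:1208.2579 — 3 statements merged into one kernel-verified Lean document; each statement's English description precedes it below -/
import Mathlib

section
/- Suppose (I, D, G ∪ {f₁, f₂}) is a (λ, μ)-pre-good triple with f₁, f₂ ∉ G and range(f₁) = range(f₂) = μ. Let M be a model of the random graph whose vertex set is enumerated as {a_i : i < μ}, with edge relation R. Fix n < ω and functions g₀, …, g_{n−1} : I → M such that for every vertex a of M and every ℓ < n, the set {t ∈ I : g_ℓ(t) R a} is supported by G mod D. Then for every h ∈ FIN(G) with A_h ≠ ∅ mod D and every finite σ ⊆ μ, the set A_h ∩ {t ∈ I : for every ℓ < n, g_ℓ(t) R a_{f₁(t)} if and only if g_ℓ(t) R a_{f₂(t)}} ∩ {t ∈ I : f₁(t) ≠ f₂(t) and f₁(t) ∉ σ and f₂(t) ∉ σ} is nonempty mod D. -/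
open Cardinal Set

universe u

/-- `A = ∅ mod D`: the complement of `A` belongs to the filter `D`. -/
def ZeroMod {I : Type u} (D : Filter I) (A : Set I) : Prop := Aᶜ ∈ D

/-- `A ≠ ∅ mod D`: the complement of `A` does not belong to the filter `D`. -/
def NonzeroMod {I : Type u} (D : Filter I) (A : Set I) : Prop := Aᶜ ∉ D

/-- `A ⊆ B mod D`. -/
def SubsetMod {I : Type u} (D : Filter I) (A B : Set I) : Prop := ZeroMod D (A \ B)

/-- `A = B mod D`. -/
def EqMod {I : Type u} (D : Filter I) (A B : Set I) : Prop := SubsetMod D A B ∧ SubsetMod D B A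

/-- `D` is a `lam`-regular filter on `I`: there is a family `⟨X i : i < lam⟩` of members of `D`
such that every `t ∈ I` belongs to only finitely many of the `X i`. -/
def IsRegularFilter {I : Type u} (lam : Cardinal.{u}) (D : Filter I) : Prop :=
  ∃ X : Ordinal.{u} → Set I, (∀ i, i < lam.ord → X i ∈ D) ∧
    ∀ t : I, {i : Ordinal.{u} | i < lam.ord ∧ t ∈ X i}.Finite

/-- `f : I → ℕ` is `D`-nonstandard. -/
def IsNonstandard {I : Type u} (D : Filter I) (f : I → ℕ) : Prop := ∀ n : ℕ, {t | n < f t} ∈ D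

/-- `f <_D g`. -/
def ltD {I : Type u} (D : Filter I) (f g : I → ℕ) : Prop := {t | f t < g t} ∈ D

/-- `f ≤_D g`. -/
def leD {I : Type u} (D : Filter I) (f g : I → ℕ) : Prop := {t | f t ≤ g t} ∈ D

/-- Flexibility for a family of sets (e.g. `D.sets`): for every nonstandard `f` there is a
`theta`-indexed family of members below `f`. -/
def IsFlexibleSets {I : Type u} (theta : Cardinal.{u}) (F : Set (Set I)) : Prop :=
  ∀ f : I → ℕ, (∀ n : ℕ, {t | n < f t} ∈ F) →
    ∃ X : Ordinal.{u} → Set I, (∀ α, α < theta.ord → X α ∈ F) ∧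
      ∀ t : I, #{α : Ordinal.{u} // α < theta.ord ∧ t ∈ X α} ≤ (f t : Cardinal)

/-- `D` is a `theta`-flexible filter. -/
def IsFlexible {I : Type u} (theta : Cardinal.{u}) (D : Filter I) : Prop :=
  IsFlexibleSets theta D.sets

/-- `F` (e.g. the sets of a filter) is `mu⁺`-good: every monotonic map from finite subsets of `mu`
into `F` has a multiplicative refinement. Finite subsets of `mu` are represented as finite sets of
ordinals `< mu.ord`. -/
def IsGoodSets {I : Type u} (mu : Cardinal.{u}) (F : Set (Set I)) : Prop :=
  ∀ f : Finset Ordinal.{u} → Set I,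
    (∀ u : Finset Ordinal.{u}, ↑u ⊆ Set.Iio mu.ord → f u ∈ F) →
    (∀ u v : Finset Ordinal.{u}, ↑v ⊆ Set.Iio mu.ord → u ⊆ v → f v ⊆ f u) →
    ∃ f' : Finset Ordinal.{u} → Set I,
      (∀ u, ↑u ⊆ Set.Iio mu.ord → f' u ∈ F) ∧
      (∀ u, ↑u ⊆ Set.Iio mu.ord → f' u ⊆ f u) ∧
      ∀ u v, ↑u ⊆ Set.Iio mu.ord → ↑v ⊆ Set.Iio mu.ord → f' u ∩ f' v = f' (u ∪ v)

/-- The filter `D` is `mu⁺`-good. -/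
def IsGoodFilter {I : Type u} (mu : Cardinal.{u}) (D : Filter I) : Prop := IsGoodSets mu D.sets

/-- An element of `FIN(G)`: a function whose domain is a finite subset of `G`, with
`h(g) ∈ range(g)` for each `g` in the domain. Functions in `G` take ordinal values. -/
structure PartialAssignment (I : Type u) (G : Set (I → Ordinal.{u})) where
  dom : Finset (I → Ordinal.{u})
  dom_sub : ↑dom ⊆ G
  val : (I → Ordinal.{u}) → Ordinal.{u}
  val_mem : ∀ g ∈ dom, val g ∈ Set.range g

/-- The set `A_h = {t ∈ I : g(t) = h(g) for all g ∈ dom h}`. -/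
def PartialAssignment.Aset {I : Type u} {G : Set (I → Ordinal.{u})}
    (h : PartialAssignment I G) : Set I :=
  {t | ∀ g ∈ h.dom, g t = h.val g}

/-- `G` is independent mod `D`: `A_h ≠ ∅ mod D` for every `h ∈ FIN(G)`. -/
def IndependentMod {I : Type u} (D : Filter I) (G : Set (I → Ordinal.{u})) : Prop :=
  ∀ h : PartialAssignment I G, NonzeroMod D h.Aset

/-- `(I, D, G)` is a `(lam, mu)`-pre-good triple: `|I| = lam`, `D` is a `lam`-regular filter,
`G` is a family of functions from `I` to `mu` (ordinals `< mu.ord`), independent mod `D`. -/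
def IsPreGoodTriple {I : Type u} (lam mu : Cardinal.{u}) (D : Filter I)
    (G : Set (I → Ordinal.{u})) : Prop :=
  #I = lam ∧ IsRegularFilter lam D ∧ (∀ g ∈ G, ∀ t : I, g t < mu.ord) ∧ IndependentMod D G

/-- `(I, D, G)` is a `(lam, mu)`-good triple: pre-good and `D` maximal among filters modulo which
`G` is independent. -/
def IsGoodTriple {I : Type u} (lam mu : Cardinal.{u}) (D : Filter I)
    (G : Set (I → Ordinal.{u})) : Prop :=
  IsPreGoodTriple lam mu D G ∧
    ∀ D' : Filter I, (∀ A ∈ D, A ∈ D') → IndependentMod D' G → D' = D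

/-- `A` is supported by `G` mod `D`: there is a partition of `I` into sets of the form `A_h`,
`h ∈ FIN(G)`, each of which is `⊆ A mod D` or disjoint from `A mod D`. -/
def SupportedBy {I : Type u} (D : Filter I) (G : Set (I → Ordinal.{u})) (A : Set I) : Prop :=
  ∃ P : Set (Set I),
    (∀ X ∈ P, ∃ h : PartialAssignment I G, X = h.Aset) ∧
    (∀ X ∈ P, ∀ Y ∈ P, X ≠ Y → X ∩ Y = ∅) ∧
    ⋃₀ P = Set.univ ∧
    ∀ X ∈ P, SubsetMod D X A ∨ ZeroMod D (X ∩ A)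

/-- `R` is the edge relation of a model of the random graph with vertex set `mu`
(identified with the ordinals `< mu.ord`). -/
def IsRandomGraphOn (mu : Cardinal.{u}) (R : Ordinal.{u} → Ordinal.{u} → Prop) : Prop :=
  (∀ a b, a < mu.ord → b < mu.ord → (R a b ↔ R b a)) ∧
  (∀ a, a < mu.ord → ¬ R a a) ∧
  ∀ U V : Finset Ordinal.{u}, ↑U ⊆ Set.Iio mu.ord → ↑V ⊆ Set.Iio mu.ord → Disjoint U V →
    ∃ x, x < mu.ord ∧ (∀ a ∈ U, R x a) ∧ ∀ b ∈ V, ¬ R x b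

/-- An ordinal `γ = β + n` (`β` limit or zero, `n < ω`) is even iff `n` is even,
equivalently iff `γ = 2·δ` for some ordinal `δ`. -/
def EvenOrdinal (γ : Ordinal.{u}) : Prop := ∃ δ : Ordinal.{u}, γ = 2 * δ

/-- `lcf(ℵ₀, D)`: the least cardinality of a family `S` of `D`-nonstandard functions
such that every `D`-nonstandard `g` satisfies `f ≤_D g` for some `f ∈ S`. -/
noncomputable def lcfAleph0 {I : Type u} (D : Filter I) : Cardinal.{u} :=
  sInf { c : Cardinal.{u} | ∃ S : Set (I → ℕ), #S = c ∧ (∀ f ∈ S, IsNonstandard D f) ∧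
    ∀ g : I → ℕ, IsNonstandard D g → ∃ f ∈ S, leD D f g }

/-- A filter on a Boolean algebra. -/
def IsBAFilter {B : Type u} [BooleanAlgebra B] (E : Set B) : Prop :=
  ⊤ ∈ E ∧ (∀ a b : B, a ∈ E → a ≤ b → b ∈ E) ∧ ∀ a b : B, a ∈ E → b ∈ E → a ⊓ b ∈ E

/-- An ultrafilter on a Boolean algebra: a maximal proper filter. -/
def IsBAUltrafilter {B : Type u} [BooleanAlgebra B] (E : Set B) : Prop :=
  IsBAFilter E ∧ ⊥ ∉ E ∧ ∀ E' : Set B, IsBAFilter E' → ⊥ ∉ E' → E ⊆ E' → E' = E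

/-- `E` is a `theta`-complete subset of the complete Boolean algebra `B`: every subset of `E`
of cardinality `< theta` has its infimum in `E`. -/
def IsThetaComplete {B : Type u} [CompleteBooleanAlgebra B] (theta : Cardinal.{u})
    (E : Set B) : Prop :=
  ∀ S : Set B, S ⊆ E → #S < theta → sInf S ∈ E

/-- `X ⊆ B` is `rho⁺`-good: every monotonic `fss(rho)`-indexed sequence of members of `X`
has a multiplicative refinement in `X`. -/
def IsGoodBA {B : Type u} [BooleanAlgebra B] (rho : Cardinal.{u}) (X : Set B) : Prop :=
  ∀ a : Finset Ordinal.{u} → B,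
    (∀ u, ↑u ⊆ Set.Iio rho.ord → a u ∈ X) →
    (∀ u v, ↑v ⊆ Set.Iio rho.ord → u ⊆ v → a v ≤ a u) →
    ∃ b : Ordinal.{u} → B, (∀ α, α < rho.ord → b α ∈ X) ∧
      ∀ u : Finset Ordinal.{u}, ↑u ⊆ Set.Iio rho.ord → u.inf b ≤ a u

/-- `kappa` is a measurable cardinal: uncountable, carrying a nonprincipal `kappa`-complete
ultrafilter. -/
def IsMeasurableCard (kappa : Cardinal.{u}) : Prop :=
  ℵ₀ < kappa ∧ ∃ (K : Type u) (U : Ultrafilter K), #K = kappa ∧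
    (∀ a : K, ({a} : Set K) ∉ U) ∧
    ∀ S : Set (Set K), (∀ A ∈ S, A ∈ U) → #S < kappa → ⋂₀ S ∈ U

/-- `kappa` is weakly compact: uncountable and every 2-coloring of pairs of ordinals `< kappa.ord`
has a homogeneous set of cardinality `kappa`. -/
def IsWeaklyCompactCard (kappa : Cardinal.{u}) : Prop :=
  ℵ₀ < kappa ∧ ∀ c : Ordinal.{u} → Ordinal.{u} → Bool,
    ∃ U : Set Ordinal.{u}, U ⊆ Set.Iio kappa.ord ∧ #U = Cardinal.lift.{u+1} kappa ∧
      ∃ v : Bool, ∀ ε ∈ U, ∀ ζ ∈ U, ε < ζ → c ε ζ = v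

/-
The pigeonhole principle does all the work. Fix `t₀ ∈ A_h`. For each vertex `a` and each `ℓ`,
the cell of the support of `{t | g ℓ t R a}` containing `t₀` is determined by finitely many members
of `G`, and on it the truth value of `g ℓ t R a` is constant mod `D`. Only finitely many truth-value
patterns `Fin n → Prop` exist but infinitely many vertices avoid `σ`, so two distinct vertices
`a₁ ≠ a₂` share a pattern. Freezing all the finitely many relevant functions of `G` at their values
at `t₀`, and setting `f₁ = a₁`, `f₂ = a₂`, gives an element of `FIN(G ∪ {f₁, f₂})`; its set is
nonzero mod `D` by independence and is contained mod `D` in the required set.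
-/

section

variable {I : Type u}

theorem nonzeroMod_iff_frequently {D : Filter I} {A : Set I} :
    NonzeroMod D A ↔ ∃ᶠ t in D, t ∈ A :=
  Iff.rfl

theorem NonzeroMod.nonempty {D : Filter I} {A : Set I} (hA : NonzeroMod D A) : A.Nonempty :=
  (nonzeroMod_iff_frequently.1 hA).exists

namespace PartialAssignment

variable {G : Set (I → Ordinal.{u})}

def atPoint (S : Finset (I → Ordinal.{u})) (hS : ↑S ⊆ G) (t₀ : I) : PartialAssignment I G where
  dom := S
  dom_sub := hS
  val g := g t₀
  val_mem _ _ := ⟨_, rfl⟩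

open Classical in
noncomputable def insert (h : PartialAssignment I G) (f : I → Ordinal.{u}) (a : Ordinal.{u})
    (ha : a ∈ Set.range f) : PartialAssignment I (Insert.insert f G) where
  dom := Insert.insert f h.dom
  dom_sub := by
    rw [Finset.coe_insert]
    exact Set.insert_subset_insert h.dom_sub
  val := Function.update h.val f a
  val_mem g hg := by
    by_cases hgf : g = f
    · subst hgf
      simpa using ha
    · rw [Function.update_of_ne hgf]
      exact h.val_mem g ((Finset.mem_insert.1 hg).resolve_left hgf)

theorem aset_insert (h : PartialAssignment I G) {f : I → Ordinal.{u}} (hf : f ∉ G)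
    (a : Ordinal.{u}) (ha : a ∈ Set.range f) :
    (h.insert f a ha).Aset = {t | f t = a} ∩ h.Aset := by
  ext t
  have hne : ∀ g ∈ h.dom, g ≠ f := fun g hg hgf => hf (hgf ▸ h.dom_sub hg)
  simp only [Aset, insert, Finset.forall_mem_insert, Function.update_self, Set.mem_inter_iff,
    Set.mem_ofPred_eq]
  refine and_congr_right fun _ => forall₂_congr fun g hg => ?_
  classical
  rw [Function.update_of_ne (hne g hg)]

end PartialAssignment

theorem SupportedBy.exists_eventually_iff {D : Filter I} {G : Set (I → Ordinal.{u})} {A : Set I}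
    (hA : SupportedBy D G A) (t₀ : I) :
    ∃ S : Finset (I → Ordinal.{u}), ↑S ⊆ G ∧ ∃ p : Prop,
      ∀ᶠ t in D, (∀ g ∈ S, g t = g t₀) → (t ∈ A ↔ p) := by
  obtain ⟨P, hcell, -, hcover, hdich⟩ := hA
  obtain ⟨X, hXP, ht₀X⟩ := Set.mem_sUnion.1 (hcover.symm ▸ Set.mem_univ t₀)
  obtain ⟨c, rfl⟩ := hcell X hXP
  have hcell_of_agree : ∀ t, (∀ g ∈ c.dom, g t = g t₀) → t ∈ c.Aset :=
    fun t ht g hg => (ht g hg).trans (ht₀X g hg)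
  refine ⟨c.dom, c.dom_sub, ?_⟩
  rcases hdich _ hXP with hsub | hzero
  · refine ⟨True, Filter.mem_of_superset hsub fun t ht hagree => ?_⟩
    exact iff_true_intro (not_not.1 fun hA => ht ⟨hcell_of_agree t hagree, hA⟩)
  · refine ⟨False, Filter.mem_of_superset hzero fun t ht hagree => ?_⟩
    exact iff_false_intro fun hA => ht ⟨hcell_of_agree t hagree, hA⟩

theorem SupportedBy.exists_eventually_forall_iff {D : Filter I} {G : Set (I → Ordinal.{u})}
    {ι : Type*} [Finite ι] {A : ι → Set I} (hA : ∀ i, SupportedBy D G (A i)) (t₀ : I) :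
    ∃ S : Finset (I → Ordinal.{u}), ↑S ⊆ G ∧ ∃ p : ι → Prop,
      ∀ᶠ t in D, (∀ g ∈ S, g t = g t₀) → ∀ i, (t ∈ A i ↔ p i) := by
  classical
  have := Fintype.ofFinite ι
  choose S hSG p hp using fun i => (hA i).exists_eventually_iff t₀
  refine ⟨Finset.univ.biUnion S, by simpa using hSG, p, ?_⟩
  filter_upwards [Filter.eventually_all.2 hp] with t ht hagree i
  exact ht i fun g hg => hagree g (Finset.mem_biUnion.2 ⟨i, Finset.mem_univ i, hg⟩)

theorem IndependentMod.frequently_eq_of_insert_insert {D : Filter I}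
    {G : Set (I → Ordinal.{u})} {f₁ f₂ : I → Ordinal.{u}}
    (hind : IndependentMod D (insert f₁ (insert f₂ G))) (hf₁ : f₁ ∉ G) (hf₂ : f₂ ∉ G)
    (hne : f₁ ≠ f₂) {a₁ a₂ : Ordinal.{u}} (ha₁ : a₁ ∈ Set.range f₁) (ha₂ : a₂ ∈ Set.range f₂)
    {S : Finset (I → Ordinal.{u})} (hS : ↑S ⊆ G) (t₀ : I) :
    ∃ᶠ t in D, f₁ t = a₁ ∧ f₂ t = a₂ ∧ ∀ g ∈ S, g t = g t₀ := by
  have := nonzeroMod_iff_frequently.1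
    (hind (((PartialAssignment.atPoint S hS t₀).insert f₂ a₂ ha₂).insert f₁ a₁ ha₁))
  rwa [PartialAssignment.aset_insert _ (by simp [hne, hf₁]),
    PartialAssignment.aset_insert _ hf₂] at this

theorem Cardinal.infinite_Iio_ord {mu : Cardinal.{u}} (hmu : ℵ₀ ≤ mu) :
    (Set.Iio mu.ord).Infinite := by
  rw [← Set.infinite_coe_iff, Cardinal.infinite_iff, Cardinal.mk_Iio_ordinal, Cardinal.card_ord,
    ← Cardinal.lift_aleph0.{u + 1, u}, Cardinal.lift_le]
  exact hmu

end

theorem indiscernible_pair_consistent_general {I : Type u} (lam mu : Cardinal.{u})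
    (hmu : ℵ₀ ≤ mu)
    (D : Filter I) (G : Set (I → Ordinal.{u}))
    (f₁ f₂ : I → Ordinal.{u}) (hf₁ : f₁ ∉ G) (hf₂ : f₂ ∉ G) (hne : f₁ ≠ f₂)
    (hpre : IsPreGoodTriple lam mu D (insert f₁ (insert f₂ G)))
    (hr₁ : Set.range f₁ = Set.Iio mu.ord) (hr₂ : Set.range f₂ = Set.Iio mu.ord)
    (R : Ordinal.{u} → Ordinal.{u} → Prop)
    (n : ℕ) (g : Fin n → I → Ordinal.{u})
    (hsupp : ∀ a : Ordinal.{u}, a < mu.ord → ∀ ℓ : Fin n,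
      SupportedBy D G {t : I | R (g ℓ t) a})
    (h : PartialAssignment I G) (hA : NonzeroMod D h.Aset)
    (σ : Finset Ordinal.{u}) :
    NonzeroMod D (h.Aset ∩
      {t : I | ∀ ℓ : Fin n, R (g ℓ t) (f₁ t) ↔ R (g ℓ t) (f₂ t)} ∩
      {t : I | f₁ t ≠ f₂ t ∧ f₁ t ∉ σ ∧ f₂ t ∉ σ}) := by
  obtain ⟨t₀, ht₀⟩ := hA.nonempty
  have : Infinite ↥(Set.Iio mu.ord \ ↑σ) :=
    ((Cardinal.infinite_Iio_ord hmu).sdiff σ.finite_toSet).to_subtype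
  choose S hSG p hp using fun a : ↥(Set.Iio mu.ord \ ↑σ) =>
    SupportedBy.exists_eventually_forall_iff (fun ℓ => hsupp a a.2.1 ℓ) t₀
  obtain ⟨a₁, a₂, ha, hpa⟩ := Finite.exists_ne_map_eq_of_infinite p
  classical
  have hSG' : ↑(h.dom ∪ S a₁ ∪ S a₂) ⊆ G := by
    simp only [Finset.coe_union, Set.union_subset_iff]
    exact ⟨⟨h.dom_sub, hSG a₁⟩, hSG a₂⟩
  have ha₁ : (a₁ : Ordinal) ∈ Set.range f₁ := by rw [hr₁]; exact a₁.2.1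
  have ha₂ : (a₂ : Ordinal) ∈ Set.range f₂ := by rw [hr₂]; exact a₂.2.1
  refine nonzeroMod_iff_frequently.2 <|
    (hpre.2.2.2.frequently_eq_of_insert_insert hf₁ hf₂ hne ha₁ ha₂ hSG' t₀).mp ?_
  filter_upwards [hp a₁, hp a₂] with t hR₁ hR₂ ⟨hft₁, hft₂, hagree⟩
  simp only [Finset.mem_union, or_imp, forall_and] at hagree
  obtain ⟨⟨hagree_h, hagree₁⟩, hagree₂⟩ := hagree
  refine ⟨⟨fun g hg => (hagree_h g hg).trans (ht₀ g hg), fun ℓ => ?_⟩, ?_⟩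
  · rw [hft₁, hft₂]
    exact (hR₁ hagree₁ ℓ).trans (hpa ▸ (hR₂ hagree₂ ℓ).symm)
  · rw [Set.mem_ofPred_eq, hft₁, hft₂]
    exact ⟨Subtype.coe_injective.ne ha, a₁.2.2, a₂.2.2⟩

/-- in a pre-good triple with two extra independent functions `f₁, f₂` onto `mu`,
given finitely many functions `g ℓ` into the random graph on `mu` whose edge-sets are supported
by `G mod D`, every set `A_h ≠ ∅ mod D` meets mod `D` the set where `f₁, f₂` are `R`-indiscernible
to all `g ℓ`, distinct, and avoid the finite set `σ`. -/
theorem indiscernible_pair_consistent {I : Type u} (lam mu : Cardinal.{u})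
    (hmu : ℵ₀ ≤ mu) (hml : mu ≤ lam)
    (D : Filter I) (G : Set (I → Ordinal.{u}))
    (f₁ f₂ : I → Ordinal.{u}) (hf₁ : f₁ ∉ G) (hf₂ : f₂ ∉ G) (hne : f₁ ≠ f₂)
    (hpre : IsPreGoodTriple lam mu D (insert f₁ (insert f₂ G)))
    (hr₁ : Set.range f₁ = Set.Iio mu.ord) (hr₂ : Set.range f₂ = Set.Iio mu.ord)
    (R : Ordinal.{u} → Ordinal.{u} → Prop) (hR : IsRandomGraphOn mu R)
    (n : ℕ) (g : Fin n → I → Ordinal.{u}) (hgval : ∀ ℓ : Fin n, ∀ t : I, g ℓ t < mu.ord)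
    (hsupp : ∀ a : Ordinal.{u}, a < mu.ord → ∀ ℓ : Fin n,
      SupportedBy D G {t : I | R (g ℓ t) a})
    (h : PartialAssignment I G) (hA : NonzeroMod D h.Aset)
    (σ : Finset Ordinal.{u}) (hσ : ↑σ ⊆ Set.Iio mu.ord) :
    NonzeroMod D (h.Aset ∩
      {t : I | ∀ ℓ : Fin n, R (g ℓ t) (f₁ t) ↔ R (g ℓ t) (f₂ t)} ∩
      {t : I | f₁ t ≠ f₂ t ∧ f₁ t ∉ σ ∧ f₂ t ∉ σ}) :=
  indiscernible_pair_consistent_general lam mu hmu D G f₁ f₂ hf₁ hf₂ hne hpre hr₁ hr₂ R n g hsupp h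
    hA σ
end

section
/- Let I be a set of cardinality at least λ, B a complete Boolean algebra, h : P(I) → B a surjective Boolean algebra homomorphism such that D = h⁻¹({1_B}) is a λ-regular filter on I, and E a θ-complete ultrafilter on B. Let Fil(h, E) = {A ⊆ I : h(A) ∈ E}. Suppose σ is a regular cardinal with σ < θ and σ ≤ λ. If g : I → σ satisfies {t ∈ I : g(t) > i} ∈ Fil(h, E) for every i < σ, then there is f : I → σ such that {t ∈ I : f(t) = g(t)} ∈ Fil(h, E) and {t ∈ I : f(t) > i} ∈ D for every i < σ. -/
open Cardinal Set

universe u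

/-!
Let `b` be the infimum of the `h {t | i < g t}`, `i < σ`; it lies in `E` by `θ`-completeness, and
`b = h A` for some `A ⊆ I`. Off `A`, replace `g` by the function `s t = sup {i + 1 : t ∈ X i}`
built from the regularity family, which is above every `i < σ` on `X i ∈ D`. On `A`, `g` is
above `i` modulo `D` because `h A ≤ h {t | i < g t}`.
-/

theorem IsRegularFilter.mono {I : Type u} {κ lam : Cardinal.{u}} {D : Filter I}
    (hD : IsRegularFilter lam D) (hκ : κ ≤ lam) : IsRegularFilter κ D := by
  obtain ⟨X, hX, hfin⟩ := hD
  have hord := Cardinal.ord_le_ord.2 hκ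
  exact ⟨X, fun i hi => hX i (hi.trans_le hord),
    fun t => (hfin t).subset fun i hi => ⟨hi.1.trans_le hord, hi.2⟩⟩

theorem IsRegularFilter.exists_forall_lt_ord {I : Type u} {κ : Cardinal.{u}} {D : Filter I}
    (hD : IsRegularFilter κ D) (hκ : ℵ₀ ≤ κ) :
    ∃ s : I → Ordinal.{u}, (∀ t, s t < κ.ord) ∧ ∀ i < κ.ord, {t | i < s t} ∈ D := by
  classical
  obtain ⟨X, hX, hfin⟩ := hD
  have hlim : Order.IsSuccLimit κ.ord := Cardinal.isSuccLimit_ord hκ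
  refine ⟨fun t => (hfin t).toFinset.sup Order.succ, fun t => ?_, fun i hi => ?_⟩
  · refine (Finset.sup_lt_iff hlim.bot_lt).2 fun i hi => hlim.succ_lt ?_
    exact ((Set.Finite.mem_toFinset _).1 hi).1
  · refine Filter.mem_of_superset (hX i hi) fun t ht => ?_
    exact (Order.lt_succ i).trans_le
      (Finset.le_sup (f := Order.succ) ((Set.Finite.mem_toFinset _).2 ⟨hi, ht⟩))

theorem IsThetaComplete.sInf_image_Iio_ord_mem {B : Type u} [CompleteBooleanAlgebra B]
    {theta κ : Cardinal.{u}} {E : Set B} (hE : IsThetaComplete theta E) (hκ : κ < theta)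
    (a : Ordinal.{u} → B) (ha : ∀ i < κ.ord, a i ∈ E) : sInf (a '' Iio κ.ord) ∈ E := by
  refine hE _ (image_subset_iff.2 ha) (lift_lt.{u, u + 1}.1 (mk_image_le_lift.trans_lt ?_))
  rwa [mk_Iio_ordinal, lift_lift, card_ord, lift_lt]

theorem compl_union_mem_of_map_le {I B : Type u} [SemilatticeSup B] [OrderTop B]
    {h : Set I → B} (hsup : ∀ A C : Set I, h (A ∪ C) = h A ⊔ h C) (htop : h univ = ⊤)
    {D : Filter I} (hD : ∀ A : Set I, A ∈ D ↔ h A = ⊤) {A C : Set I} (hAC : h A ≤ h C) :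
    Aᶜ ∪ C ∈ D := by
  rw [hD, hsup, eq_top_iff, ← htop, ← compl_union_self A, hsup]
  exact sup_le_sup_left hAC _

theorem nonstandard_reflected_to_filter_general {I : Type u} {B : Type u} [CompleteBooleanAlgebra B]
    (lam theta sigma : Cardinal.{u})
    (h : Set I → B) (hsurj : Function.Surjective h)
    (hsup : ∀ A C : Set I, h (A ∪ C) = h A ⊔ h C)
    (htop : h Set.univ = ⊤)
    (D : Filter I) (hD : ∀ A : Set I, A ∈ D ↔ h A = ⊤)
    (hreg : IsRegularFilter lam D)
    (E : Set B) (hE : IsBAUltrafilter E) (hcomp : IsThetaComplete theta E)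
    (hsigreg : sigma.IsRegular) (hst : sigma < theta) (hsl : sigma ≤ lam)
    (g : I → Ordinal.{u}) (hgval : ∀ t : I, g t < sigma.ord)
    (hgbig : ∀ i, i < sigma.ord → h {t : I | i < g t} ∈ E) :
    ∃ f : I → Ordinal.{u}, (∀ t : I, f t < sigma.ord) ∧
      h {t : I | f t = g t} ∈ E ∧
      ∀ i, i < sigma.ord → {t : I | i < f t} ∈ D := by
  classical
  obtain ⟨s, hs_lt, hs_mem⟩ := (hreg.mono hsl).exists_forall_lt_ord hsigreg.aleph0_le
  obtain ⟨A, hA⟩ := hsurj (sInf ((fun i => h {t | i < g t}) '' Iio sigma.ord))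
  have hAE : h A ∈ E := hA ▸ hcomp.sInf_image_Iio_ord_mem hst _ hgbig
  have hA_le (i : Ordinal.{u}) (hi : i < sigma.ord) : h A ≤ h {t | i < g t} :=
    hA ▸ sInf_le (mem_image_of_mem _ hi)
  refine ⟨A.piecewise g s, fun t => ?_, ?_, fun i hi => ?_⟩
  · by_cases ht : t ∈ A <;> simp [ht, hgval, hs_lt]
  · exact hE.1.2.1 _ _ hAE (Monotone.of_map_sup hsup fun t ht => by simp [ht])
  · refine Filter.mem_of_superset
      (Filter.inter_mem (compl_union_mem_of_map_le hsup htop hD (hA_le i hi)) (hs_mem i hi)) ?_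
    rintro t ⟨hgt | hgt, hts⟩ <;> by_cases ht : t ∈ A <;> simp_all

/-- with `B` complete and `E` a `theta`-complete ultrafilter on `B`, any
`g : I → sigma` (`sigma` regular, `sigma < theta`, `sigma ≤ lam`) which is above every `i < sigma`
mod `Fil(h,E)` agrees mod `Fil(h,E)` with some `f` already above every `i < sigma` mod `D`. -/
theorem nonstandard_reflected_to_filter {I : Type u} {B : Type u} [CompleteBooleanAlgebra B]
    (lam theta sigma : Cardinal.{u}) (hI : lam ≤ #I)
    (h : Set I → B) (hsurj : Function.Surjective h)
    (hsup : ∀ A C : Set I, h (A ∪ C) = h A ⊔ h C)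
    (hinf : ∀ A C : Set I, h (A ∩ C) = h A ⊓ h C)
    (hcompl : ∀ A : Set I, h Aᶜ = (h A)ᶜ)
    (htop : h Set.univ = ⊤) (hbot : h ∅ = ⊥)
    (D : Filter I) (hD : ∀ A : Set I, A ∈ D ↔ h A = ⊤)
    (hreg : IsRegularFilter lam D)
    (E : Set B) (hE : IsBAUltrafilter E) (hcomp : IsThetaComplete theta E)
    (hsigreg : sigma.IsRegular) (hst : sigma < theta) (hsl : sigma ≤ lam)
    (g : I → Ordinal.{u}) (hgval : ∀ t : I, g t < sigma.ord)
    (hgbig : ∀ i, i < sigma.ord → h {t : I | i < g t} ∈ E) :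
    ∃ f : I → Ordinal.{u}, (∀ t : I, f t < sigma.ord) ∧
      h {t : I | f t = g t} ∈ E ∧
      ∀ i, i < sigma.ord → {t : I | i < f t} ∈ D :=
  nonstandard_reflected_to_filter_general lam theta sigma h hsurj hsup htop D hD hreg E hE hcomp
    hsigreg hst hsl g hgval hgbig
end

section
/- Let I be a set of cardinality at least λ, B a complete Boolean algebra, h : P(I) → B a surjective Boolean algebra homomorphism such that D = h⁻¹({1_B}) is a λ-regular filter on I, and E a θ-complete ultrafilter on B with θ > ℵ₀. If D is λ-flexible, then the ultrafilter Fil(h, E) = {A ⊆ I : h(A) ∈ E} is λ-flexible. -/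
open Cardinal Set

universe u

/-!
Let `b = ⨅ n, h {t | n < f t}`, which lies in `E` because `E` is countably complete, and pick `A`
with `h A = b`. Gluing `f` on `A` to a `D`-nonstandard function off `A` (one exists since `D` is
regular) gives a `D`-nonstandard function, because `b ⊔ bᶜ = ⊤`. Its `D`-flexibility family,
cut down to `A`, is a flexibility family for `f`: each member has `h`-image `⊤ ⊓ b = b ∈ E`.
For finite `λ = n` the constant family `{t | n < f t}` already works.
-/

variable {I : Type u}

theorem isFlexibleSets_of_lt_aleph0 {lam : Cardinal.{u}} (hlam : lam < ℵ₀) (F : Set (Set I)) :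
    IsFlexibleSets lam F := by
  obtain ⟨n, rfl⟩ := lt_aleph0.1 hlam
  intro f hf
  refine ⟨fun _ => {t | n < f t}, fun _ _ => hf n, fun t => ?_⟩
  by_cases ht : n < f t
  · calc #{α : Ordinal.{u} // α < (n : Cardinal).ord ∧ t ∈ {t | n < f t}}
          ≤ #(Iio (n : Cardinal.{u}).ord) := mk_le_mk_of_subset fun _ hα => hα.1
      _ = n := by simp
      _ ≤ f t := by exact_mod_cast ht.le
  · simp [ht]

theorem IsRegularFilter.exists_isNonstandard {lam : Cardinal.{u}} {D : Filter I}
    (hreg : IsRegularFilter lam D) (hlam : ℵ₀ ≤ lam) : ∃ g : I → ℕ, IsNonstandard D g := by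
  obtain ⟨X, hXD, hXfin⟩ := hreg
  have hcast : ∀ k : ℕ, (k : Ordinal) < lam.ord := fun k =>
    (Ordinal.natCast_lt_omega0 k).trans_le (ord_aleph0 ▸ ord_le_ord.2 hlam)
  refine ⟨fun t => {i | i < lam.ord ∧ t ∈ X i}.ncard, fun n => ?_⟩
  have hinter : ⋂ k ∈ Finset.range (n + 1), X k ∈ D :=
    (Filter.biInter_finset_mem _).2 fun k _ => hXD k (hcast k)
  refine D.mem_of_superset hinter fun t ht => ?_
  have hsub : (Nat.cast : ℕ → Ordinal) '' ↑(Finset.range (n + 1)) ⊆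
      {i | i < lam.ord ∧ t ∈ X i} := by
    rintro _ ⟨k, hk, rfl⟩
    exact ⟨hcast k, mem_iInter₂.1 ht k hk⟩
  have hcard := ncard_le_ncard hsub (hXfin t)
  rwa [ncard_image_of_injective _ Nat.cast_injective, ncard_coe_finset,
    Finset.card_range, Nat.succ_le_iff] at hcard

theorem IsFlexible.exists_inter_family_le {lam : Cardinal.{u}} {D : Filter I}
    (hflex : IsFlexible lam D) {f g : I → ℕ} (hg : IsNonstandard D g) {A : Set I}
    (hgA : ∀ t ∈ A, g t ≤ f t) :
    ∃ X : Ordinal.{u} → Set I, (∀ α, α < lam.ord → X α ∈ D) ∧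
      ∀ t : I, #{α : Ordinal.{u} // α < lam.ord ∧ t ∈ X α ∩ A} ≤ (f t : Cardinal) := by
  obtain ⟨X, hXD, hXg⟩ := hflex g hg
  refine ⟨X, hXD, fun t => ?_⟩
  by_cases htA : t ∈ A
  · calc #{α : Ordinal.{u} // α < lam.ord ∧ t ∈ X α ∩ A}
          ≤ #{α : Ordinal.{u} // α < lam.ord ∧ t ∈ X α} :=
            mk_le_mk_of_subset fun _ hα => ⟨hα.1, hα.2.1⟩
      _ ≤ g t := hXg t
      _ ≤ f t := by exact_mod_cast hgA t htA
  · simp [htA]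

theorem IsThetaComplete.iInf_mem {B : Type u} [CompleteBooleanAlgebra B] {theta : Cardinal.{u}}
    {E : Set B} (hcomp : IsThetaComplete theta E) (htheta : ℵ₀ < theta) {a : ℕ → B}
    (ha : ∀ n, a n ∈ E) : ⨅ n, a n ∈ E := by
  rw [← sInf_range]
  exact hcomp _ (range_subset_iff.2 ha) ((countable_range a).le_aleph0.trans_lt htheta)

theorem isNonstandard_piecewise {B : Type u} [BooleanAlgebra B] {h : Set I → B}
    (hsup : ∀ A C : Set I, h (A ∪ C) = h A ⊔ h C)
    (hinf : ∀ A C : Set I, h (A ∩ C) = h A ⊓ h C)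
    (hcompl : ∀ A : Set I, h Aᶜ = (h A)ᶜ)
    {D : Filter I} (hD : ∀ A : Set I, A ∈ D ↔ h A = ⊤)
    {f g : I → ℕ} {A : Set I} [DecidablePred (· ∈ A)]
    (hA : ∀ n : ℕ, h A ≤ h {t | n < f t}) (hg : IsNonstandard D g) :
    IsNonstandard D (A.piecewise f g) := by
  intro n
  rw [hD, show {t | n < A.piecewise f g t} = A.piecewise f g ⁻¹' Ioi n from rfl,
    piecewise_preimage, Set.ite, sdiff_eq, hsup, hinf, hinf, hcompl,
    (hD (g ⁻¹' Ioi n)).1 (hg n), (inf_eq_right (a := h (f ⁻¹' Ioi n))).2 (hA n), top_inf_eq,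
    sup_compl_eq_top]

theorem induced_ultrafilter_flexible_general {I : Type u} {B : Type u} [CompleteBooleanAlgebra B]
    (lam theta : Cardinal.{u})
    (h : Set I → B) (hsurj : Function.Surjective h)
    (hsup : ∀ A C : Set I, h (A ∪ C) = h A ⊔ h C)
    (hinf : ∀ A C : Set I, h (A ∩ C) = h A ⊓ h C)
    (hcompl : ∀ A : Set I, h Aᶜ = (h A)ᶜ)
    (D : Filter I) (hD : ∀ A : Set I, A ∈ D ↔ h A = ⊤)
    (hreg : IsRegularFilter lam D)
    (E : Set B)
    (htheta : ℵ₀ < theta) (hcomp : IsThetaComplete theta E)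
    (hflex : IsFlexible lam D) :
    IsFlexibleSets lam {A : Set I | h A ∈ E} := by
  classical
  rcases lt_or_ge lam ℵ₀ with hfin | hinfinite
  · exact isFlexibleSets_of_lt_aleph0 hfin _
  intro f hf
  obtain ⟨A, hA⟩ := hsurj (⨅ n : ℕ, h {t | n < f t})
  obtain ⟨g, hg⟩ := hreg.exists_isNonstandard hinfinite
  have hglued : IsNonstandard D (A.piecewise f g) :=
    isNonstandard_piecewise hsup hinf hcompl hD (fun n => hA ▸ iInf_le _ n) hg
  obtain ⟨X, hXD, hXf⟩ :=
    hflex.exists_inter_family_le hglued fun t ht => (piecewise_eq_of_mem _ _ _ ht).le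
  refine ⟨fun α => X α ∩ A, fun α hα => ?_, hXf⟩
  change h (X α ∩ A) ∈ E
  rw [hinf, (hD _).1 (hXD α hα), top_inf_eq, hA]
  exact hcomp.iInf_mem htheta hf

/-- with `E` a `theta`-complete ultrafilter (`theta > ℵ₀`) on the complete Boolean
algebra `B`, if `D = h⁻¹(1)` is `lam`-flexible then so is the induced ultrafilter
`Fil(h, E) = {A : h A ∈ E}`. -/
theorem induced_ultrafilter_flexible {I : Type u} {B : Type u} [CompleteBooleanAlgebra B]
    (lam theta : Cardinal.{u}) (hI : lam ≤ #I)
    (h : Set I → B) (hsurj : Function.Surjective h)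
    (hsup : ∀ A C : Set I, h (A ∪ C) = h A ⊔ h C)
    (hinf : ∀ A C : Set I, h (A ∩ C) = h A ⊓ h C)
    (hcompl : ∀ A : Set I, h Aᶜ = (h A)ᶜ)
    (htop : h Set.univ = ⊤) (hbot : h ∅ = ⊥)
    (D : Filter I) (hD : ∀ A : Set I, A ∈ D ↔ h A = ⊤)
    (hreg : IsRegularFilter lam D)
    (E : Set B) (hE : IsBAUltrafilter E)
    (htheta : ℵ₀ < theta) (hcomp : IsThetaComplete theta E)
    (hflex : IsFlexible lam D) :
    IsFlexibleSets lam {A : Set I | h A ∈ E} :=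
  induced_ultrafilter_flexible_general lam theta h hsurj hsup hinf hcompl D hD hreg E htheta hcomp
    hflex
end
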